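/- Let p ≥ 3 be a prime and let G be a finite p-group generated by two elements, of nilpotency class greater than 3 and in which every proper subgroup has nilpotency class at most 3. Then for all x, y, z, t ∈ G with z = x or t = x: [x^p, y, z, t] = [x,y,z,t]^p and [y, x^p, z, t] = [y,x,z,t]^p. -/

import Mathlib

/-- Commutator with the convention of the paper: `[x, y] = x⁻¹ y⁻¹ x y`. -/
def pcomm {G : Type*} [Group G] (x y : G) : G := x⁻¹ * y⁻¹ * x * y

/-- Left-normed iterated commutator `[x, y, z₁, …, z_s]`. -/
def lcomm {G : Type*} [Group G] (x y : G) (zs : List G) : G :=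
  zs.foldl pcomm (pcomm x y)

/-!
Every subgroup `⟨a, bᵖ⟩G'` is proper: otherwise `b` would be trivial modulo `⟨a⟩G'`, so
`⟨a⟩G' = G`, and since `G' ≤ Φ(G)` the group would be cyclic. Hence triple commutators of
elements of `⟨a, bᵖ⟩G'`, in particular of `⟨x⟩G'`, are central in it. For `g ∈ G'` this makes
`[g, tᴺ] = [g,t]ᴺ [g,t,t]^(N choose 2)` exact, and collecting gives
`[xᵖ, y] = vᵖ [v,x]^(p choose 2) w` with `v = [x, y]` and `w` centralizing `⟨x⟩G'`
(likewise for `[y, xᵖ]`). As `p` is odd, `p ∣ (p choose 2)`. The correction terms created by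
the commutators with `z` and `t` all centralize `⟨x⟩G'` (resp. `⟨t⟩G'`), so they vanish in
the last commutator; the basic reason is that if `g ∈ G'` centralizes `G'` and commutes with
`xᵖ`, then `gᵖ` commutes with `x`.
-/

open Subgroup
open scoped commutatorElement

section

variable {G : Type*} [Group G]

theorem commutator_le_frattini [Finite G] [Group.IsNilpotent G] :
    commutator G ≤ frattini G := by
  refine le_iInf₂ fun M hM => ?_
  have : M.Normal :=
    NormalizerCondition.normal_of_coatom M Group.normalizerCondition_of_isNilpotent hM
  obtain ⟨g, -, hg⟩ := SetLike.exists_of_lt hM.lt_top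
  refine this.commutator_le_of_self_sup_commutative_eq_top (H := zpowers g) ?_ inferInstance
  exact hM.2 _ (SetLike.lt_iff_le_and_exists.mpr
    ⟨le_sup_left, g, mem_sup_right (mem_zpowers g), hg⟩)

theorem eq_top_of_sup_commutator_eq_top [Finite G] [Group.IsNilpotent G] {H : Subgroup G}
    (h : H ⊔ commutator G = ⊤) : H = ⊤ :=
  frattini_nongenerating (top_le_iff.mp (h ▸ sup_le_sup_left commutator_le_frattini H))

theorem IsPGroup.eq_one_of_mem_zpowers_pow {p : ℕ} [Fact p.Prime] (hG : IsPGroup p G) {g : G}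
    (h : g ∈ zpowers (g ^ p)) : g = 1 := by
  by_contra hg
  rw [mem_zpowers_pow_iff, Nat.gcd_eq_left (hG.dvd_orderOf hg)] at h
  exact (Fact.out : p.Prime).one_lt.ne' h

-- Modulo `⟨a⟩G'` everything is a power of the image of `bᵖ`, so the image of `b` is trivial.
theorem zpowers_sup_commutator_eq_top_of_closure_pow {p : ℕ} [Fact p.Prime] (hG : IsPGroup p G)
    {a b : G} (h : closure {a, b ^ p} ⊔ commutator G = ⊤) :
    zpowers a ⊔ commutator G = ⊤ := by
  set N := zpowers a ⊔ commutator G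
  have : N.Normal := Normal.of_commutator_le G le_sup_right
  set π := QuotientGroup.mk' N
  have hker : ∀ g ∈ N, π g = 1 := fun g hg => (QuotientGroup.eq_one_iff g).mpr hg
  have hle : closure {a, b ^ p} ⊔ commutator G ≤ (zpowers (π b ^ p)).comap π := by
    rw [sup_le_iff, closure_le, Set.insert_subset_iff, Set.singleton_subset_iff]
    refine ⟨⟨?_, ?_⟩, fun g hg => ?_⟩
    · rw [SetLike.mem_coe, mem_comap, hker a (mem_sup_left (mem_zpowers a))]
      exact one_mem _
    · rw [SetLike.mem_coe, mem_comap, map_pow]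
      exact mem_zpowers _
    · rw [mem_comap, hker g (mem_sup_right hg)]
      exact one_mem _
  have hbN : b ∈ N := (QuotientGroup.eq_one_iff b).mp
    ((hG.to_quotient N).eq_one_of_mem_zpowers_pow (hle (h ▸ mem_top b)))
  rw [eq_top_iff, ← h, sup_le_iff, closure_le, Set.insert_subset_iff, Set.singleton_subset_iff]
  exact ⟨⟨mem_sup_left (mem_zpowers a), pow_mem hbN p⟩, le_sup_right⟩

theorem closure_pow_sup_commutator_ne_top [Finite G] {p : ℕ} [Fact p.Prime] (hG : IsPGroup p G)
    (hG' : commutator G ≠ ⊥) (a b : G) : closure {a, b ^ p} ⊔ commutator G ≠ ⊤ := by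
  intro h
  have := hG.isNilpotent
  have ha : zpowers a = ⊤ :=
    eq_top_of_sup_commutator_eq_top (zpowers_sup_commutator_eq_top_of_closure_pow hG h)
  apply hG'
  rw [commutator_def, ← ha, commutator_eq_bot_iff_le_centralizer]
  exact le_centralizer _

theorem Odd.dvd_choose_two {p n : ℕ} (hp : Odd p) (hn : p ∣ n) : p ∣ n.choose 2 := by
  have h2 : n.choose 2 * 2 = n * (n - 1) := by
    rw [Nat.choose_two_right, Nat.div_mul_cancel (Nat.even_mul_pred_self n).two_dvd]
  exact hp.coprime_two_right.dvd_mul_right.mp (h2 ▸ dvd_mul_of_dvd_left hn _)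

theorem commute_of_mem_centralizer {S : Set G} {g h : G} (hg : g ∈ centralizer S) (hh : h ∈ S) :
    Commute g h :=
  (mem_centralizer_iff.mp hg h hh).symm

theorem pcomm_eq_one_iff {a b : G} : pcomm a b = 1 ↔ Commute a b := by
  rw [show pcomm a b = (b * a)⁻¹ * (a * b) by simp [pcomm, mul_assoc], inv_mul_eq_one, eq_comm]
  rfl

theorem Commute.pcomm_eq_one {a b : G} (h : Commute a b) : pcomm a b = 1 :=
  pcomm_eq_one_iff.mpr h

theorem pcomm_one_left (a : G) : pcomm 1 a = 1 := by simp [pcomm]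

theorem pcomm_one_right (a : G) : pcomm a 1 = 1 := by simp [pcomm]

theorem pcomm_mul_left (a b c : G) :
    pcomm (a * b) c = pcomm a c * pcomm (pcomm a c) b * pcomm b c := by
  simp only [pcomm]; group

theorem pcomm_mul_right (a b c : G) :
    pcomm a (b * c) = pcomm a c * (pcomm a b * pcomm (pcomm a b) c) := by
  simp only [pcomm]; group

theorem mul_eq_mul_mul_pcomm (a b : G) : a * b = b * a * pcomm a b := by
  simp only [pcomm]; group

theorem pcomm_eq_commutatorElement (a b : G) : pcomm a b = ⁅a⁻¹, b⁻¹⁆ := by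
  simp only [pcomm, commutatorElement_def]; group

theorem pcomm_mem_commutator (a b : G) : pcomm a b ∈ commutator G := by
  rw [pcomm_eq_commutatorElement, commutator_def]
  exact commutator_mem_commutator (mem_top _) (mem_top _)

theorem pcomm_mem_lowerCentralSeries_succ {n : ℕ} {a : G}
    (ha : a ∈ (⊤ : Subgroup G).lowerCentralSeries n) (b : G) :
    pcomm a b ∈ (⊤ : Subgroup G).lowerCentralSeries (n + 1) := by
  rw [Subgroup.lowerCentralSeries_succ, pcomm_eq_commutatorElement]
  exact commutator_mem_commutator (inv_mem ha) (mem_top _)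

theorem pcomm_mem_centralizer {N : Subgroup G} [N.Normal] {g : G} (hg : g ∈ centralizer N)
    (z : G) : pcomm g z ∈ centralizer N := by
  have hconj := (normal_centralizer (H := N)).conj_mem g hg z⁻¹
  rw [inv_inv] at hconj
  rw [show pcomm g z = g⁻¹ * (z⁻¹ * g * z) by simp only [pcomm]; group]
  exact mul_mem (inv_mem hg) hconj

theorem pcomm_mul_left_of_mem_centralizer {w : G} (hw : w ∈ centralizer (commutator G))
    (a z : G) : pcomm (a * w) z = pcomm a z * pcomm w z := by
  rw [pcomm_mul_left,
    (commute_of_mem_centralizer hw (pcomm_mem_commutator a z)).symm.pcomm_eq_one, mul_one]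

theorem pcomm_pow_right_of_commute {e t : G} (h : Commute (pcomm e t) t) (N : ℕ) :
    pcomm e (t ^ N) = pcomm e t ^ N := by
  induction N with
  | zero => simp [pcomm_one_right]
  | succ N ih =>
    rw [pow_succ, pcomm_mul_right, ih, (h.pow_left N).pcomm_eq_one, mul_one, ← pow_succ']

theorem pcomm_pow_right {g t : G} (h₁ : Commute (pcomm (pcomm g t) t) t)
    (h₂ : Commute (pcomm (pcomm g t) t) (pcomm g t)) (N : ℕ) :
    pcomm g (t ^ N) = pcomm g t ^ N * pcomm (pcomm g t) t ^ N.choose 2 := by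
  induction N with
  | zero => simp [pcomm_one_right]
  | succ N ih =>
    set e := pcomm g t
    set D := pcomm e t
    rw [pow_succ', pcomm_mul_right, ih, pcomm_pow_right_of_commute h₁, Nat.choose_succ_succ',
      Nat.choose_one_right, pow_succ, add_comm, pow_add]
    calc e ^ N * D ^ N.choose 2 * (e * D ^ N) = e ^ N * (D ^ N.choose 2 * e) * D ^ N := by group
      _ = e ^ N * e * (D ^ N.choose 2 * D ^ N) := by rw [(h₂.pow_left _).eq]; group

theorem pcomm_pow_left {g t : G} (h₁ : Commute (pcomm (pcomm g t) g) g)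
    (h₂ : Commute (pcomm (pcomm g t) g) (pcomm g t)) (N : ℕ) :
    pcomm (g ^ N) t = pcomm g t ^ N * pcomm (pcomm g t) g ^ N.choose 2 := by
  induction N with
  | zero => simp [pcomm_one_left]
  | succ N ih =>
    set e := pcomm g t
    set D := pcomm e g
    rw [pow_succ', pcomm_mul_left, ih, pcomm_pow_right_of_commute h₁, Nat.choose_succ_succ',
      Nat.choose_one_right, pow_succ', pow_add]
    calc e * D ^ N * (e ^ N * D ^ N.choose 2) = e * (D ^ N * e ^ N) * D ^ N.choose 2 := by group
      _ = e * e ^ N * (D ^ N * D ^ N.choose 2) := by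
        rw [((h₂.pow_left N).pow_right N).eq]; group

theorem pcomm_pow_left_of_commute {g t : G} (h : Commute (pcomm g t) g) (N : ℕ) :
    pcomm (g ^ N) t = pcomm g t ^ N := by
  have hD := h.pcomm_eq_one
  rw [pcomm_pow_left (hD ▸ Commute.one_left g) (hD ▸ Commute.one_left _), hD, one_pow, mul_one]

theorem pcomm_pcomm_pow_right {g t : G} (h₁ : Commute (pcomm (pcomm g t) t) t)
    (h₂ : Commute (pcomm (pcomm g t) t) (pcomm g t)) (N : ℕ) :
    pcomm (pcomm g t) t ^ N = pcomm (pcomm g (t ^ N)) t := by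
  -- compare the formula for `[g, t ^ (N + 1)]` with the expansion of `[g, t ^ N * t]`
  have h := pcomm_pow_right h₁ h₂ (N + 1)
  rw [pow_succ, pcomm_mul_right, pcomm_pow_right h₁ h₂ N, Nat.choose_succ_succ',
    Nat.choose_one_right, pow_succ', pow_add] at h
  rw [pcomm_pow_right h₁ h₂ N]
  set e := pcomm g t
  set D := pcomm e t
  set X := pcomm (e ^ N * D ^ N.choose 2) t
  have h' : e * e ^ N * D ^ N.choose 2 * X = e * e ^ N * D ^ N.choose 2 * D ^ N := by
    rw [mul_assoc _ _ (D ^ N), ← (Commute.pow_pow_self D N (N.choose 2)).eq]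
    convert h using 1; group
  exact (mul_left_cancel h').symm

theorem pow_mul_pow_eq_mul_pcomm_pow {s v : G} (h₁ : Commute (pcomm s v) s)
    (h₂ : Commute (pcomm s v) v) (i j : ℕ) :
    s ^ i * v ^ j = v ^ j * s ^ i * pcomm s v ^ (i * j) := by
  rw [mul_eq_mul_mul_pcomm (s ^ i), pcomm_pow_right_of_commute, pcomm_pow_left_of_commute h₁,
    ← pow_mul]
  rw [pcomm_pow_left_of_commute h₁]
  exact h₂.pow_left i

def TripleCommCentral (H : Subgroup G) : Prop :=
  ∀ a ∈ H, ∀ b ∈ H, ∀ c ∈ H, pcomm (pcomm a b) c ∈ centralizer H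

theorem TripleCommCentral.anti {H K : Subgroup G} (hH : TripleCommCentral H) (hKH : K ≤ H) :
    TripleCommCentral K := fun a ha b hb c hc =>
  centralizer_le hKH (hH a (hKH ha) b (hKH hb) c (hKH hc))

theorem TripleCommCentral.commute {H : Subgroup G} (hH : TripleCommCentral H) {a b c d : G}
    (ha : a ∈ H) (hb : b ∈ H) (hc : c ∈ H) (hd : d ∈ H) : Commute (pcomm (pcomm a b) c) d :=
  commute_of_mem_centralizer (hH a ha b hb c hc) hd

theorem tripleCommCentral_of_lowerCentralSeries_eq_bot {H : Subgroup G}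
    (h : (⊤ : Subgroup H).lowerCentralSeries 3 = ⊥) : TripleCommCentral H := by
  intro a ha b hb c hc
  rw [mem_centralizer_iff]
  intro d hd
  have h1 := pcomm_mem_lowerCentralSeries_succ (n := 0) (mem_top (⟨a, ha⟩ : H)) ⟨b, hb⟩
  have h3 := pcomm_mem_lowerCentralSeries_succ
    (pcomm_mem_lowerCentralSeries_succ h1 ⟨c, hc⟩) ⟨d, hd⟩
  rw [h, mem_bot] at h3
  exact (pcomm_eq_one_iff.mp (congrArg Subtype.val h3)).eq.symm

def zpowersSupCommutator (x : G) : Subgroup G := zpowers x ⊔ commutator G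

instance (x : G) : (zpowersSupCommutator x).Normal := Normal.of_commutator_le G le_sup_right

theorem mem_zpowersSupCommutator_self (x : G) : x ∈ zpowersSupCommutator x :=
  mem_sup_left (mem_zpowers x)

theorem commutator_le_zpowersSupCommutator (x : G) : commutator G ≤ zpowersSupCommutator x :=
  le_sup_right

theorem zpowersSupCommutator_le_closure_pair_sup (x c : G) :
    zpowersSupCommutator x ≤ closure {x, c} ⊔ commutator G :=
  sup_le_sup_right (zpowers_le.mpr (subset_closure (Set.mem_insert x _))) _

theorem centralizer_zpowersSupCommutator_le (x : G) :
    centralizer (zpowersSupCommutator x) ≤ centralizer (commutator G : Set G) :=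
  centralizer_le (commutator_le_zpowersSupCommutator x)

theorem mem_centralizer_zpowersSupCommutator {x g : G} (hx : Commute g x)
    (hg : g ∈ centralizer (commutator G)) : g ∈ centralizer (zpowersSupCommutator x) := by
  have : zpowersSupCommutator x ≤ centralizer {g} :=
    sup_le (zpowers_le.mpr (mem_centralizer_singleton_iff.mpr hx.eq.symm))
      fun h hh => mem_centralizer_singleton_iff.mpr (mem_centralizer_iff.mp hg h hh)
  exact mem_centralizer_iff.mpr fun h hh => mem_centralizer_singleton_iff.mp (this hh)

theorem left_mem_closure_pair_sup (a c : G) (K : Subgroup G) : a ∈ closure {a, c} ⊔ K :=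
  mem_sup_left (subset_closure (Set.mem_insert a _))

theorem right_mem_closure_pair_sup (a c : G) (K : Subgroup G) : c ∈ closure {a, c} ⊔ K :=
  mem_sup_left (subset_closure (Set.mem_insert_of_mem a rfl))

theorem centralizer_closure_pair_sup_le (a c : G) :
    centralizer ((closure {a, c} ⊔ commutator G : Subgroup G) : Set G) ≤
      centralizer (commutator G : Set G) :=
  centralizer_le (le_sup_right : commutator G ≤ closure {a, c} ⊔ commutator G)

theorem pcomm_mul_of_mem_centralizer_zpowersSupCommutator {t R : G}
    (hR : R ∈ centralizer (zpowersSupCommutator t)) (a : G) : pcomm (a * R) t = pcomm a t := by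
  rw [pcomm_mul_left_of_mem_centralizer (centralizer_zpowersSupCommutator_le t hR),
    (commute_of_mem_centralizer hR (mem_zpowersSupCommutator_self t)).pcomm_eq_one, mul_one]

section

variable {p : ℕ} (hM : ∀ a b : G, TripleCommCentral (closure {a, b ^ p} ⊔ commutator G))
include hM

theorem tripleCommCentral_zpowersSupCommutator (x : G) :
    TripleCommCentral (zpowersSupCommutator x) :=
  (hM x x).anti (zpowersSupCommutator_le_closure_pair_sup x (x ^ p))

theorem pcomm_pow_right_of_mem_commutator {g : G} (hg : g ∈ commutator G) (t : G) (N : ℕ) :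
    pcomm g (t ^ N) = pcomm g t ^ N * pcomm (pcomm g t) t ^ N.choose 2 := by
  have hS := tripleCommCentral_zpowersSupCommutator hM t
  have hg' := commutator_le_zpowersSupCommutator t hg
  have ht := mem_zpowersSupCommutator_self t
  exact pcomm_pow_right (hS.commute hg' ht ht ht)
    (hS.commute hg' ht ht (commutator_le_zpowersSupCommutator t (pcomm_mem_commutator g t))) N

theorem pcomm_pow_left_of_mem_commutator {g : G} (hg : g ∈ commutator G) (t : G) (N : ℕ) :
    pcomm (g ^ N) t = pcomm g t ^ N * pcomm (pcomm g t) g ^ N.choose 2 := by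
  have hS := tripleCommCentral_zpowersSupCommutator hM t
  have hg' := commutator_le_zpowersSupCommutator t hg
  have ht := mem_zpowersSupCommutator_self t
  exact pcomm_pow_left (hS.commute hg' ht hg' hg')
    (hS.commute hg' ht hg' (commutator_le_zpowersSupCommutator t (pcomm_mem_commutator g t))) N

theorem pcomm_pcomm_pow_right_of_mem_commutator {g : G} (hg : g ∈ commutator G) (t : G)
    (N : ℕ) :
    pcomm (pcomm g t) t ^ N = pcomm (pcomm g (t ^ N)) t := by
  have hS := tripleCommCentral_zpowersSupCommutator hM t
  have hg' := commutator_le_zpowersSupCommutator t hg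
  have ht := mem_zpowersSupCommutator_self t
  exact pcomm_pcomm_pow_right (hS.commute hg' ht ht ht)
    (hS.commute hg' ht ht (commutator_le_zpowersSupCommutator t (pcomm_mem_commutator g t))) N

theorem pcomm_pcomm_pcomm_self_pow_eq_one {α : G} (hα : α ∈ commutator G) (β w : G) :
    pcomm (pcomm (pcomm α β) w) (pcomm α β) ^ p = 1 := by
  set g := pcomm α β
  have hg : g ∈ commutator G := pcomm_mem_commutator α β
  have hS := tripleCommCentral_zpowersSupCommutator hM w
  have hg' := commutator_le_zpowersSupCommutator w hg
  have hw := mem_zpowersSupCommutator_self w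
  have hν : pcomm g (w ^ p) ∈ centralizer (commutator G) :=
    centralizer_closure_pair_sup_le β (w ^ p) (hM β w α (mem_sup_right hα) β
      (left_mem_closure_pair_sup β _ _) (w ^ p) (right_mem_closure_pair_sup _ _ _))
  have hY : pcomm (pcomm g w) w ^ p.choose 2 ∈ centralizer (commutator G) :=
    pow_mem (centralizer_zpowersSupCommutator_le w (hS g hg' w hw w hw)) _
  have hτ : pcomm (pcomm g w) g ∈ centralizer (commutator G) :=
    centralizer_zpowersSupCommutator_le w (hS g hg' w hw g hg')
  -- expanding `[[g, wᵖ], g] = 1` leaves `[g, w, g]ᵖ`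
  have h := (commute_of_mem_centralizer hν hg).pcomm_eq_one
  rwa [pcomm_pow_right_of_mem_commutator hM hg, pcomm_mul_left_of_mem_centralizer hY,
    (commute_of_mem_centralizer hY hg).pcomm_eq_one, mul_one,
    pcomm_pow_left_of_mem_commutator hM (pcomm_mem_commutator g w),
    (commute_of_mem_centralizer hτ (pcomm_mem_commutator g w)).pcomm_eq_one, one_pow,
    mul_one] at h

theorem pcomm_pow_left_of_dvd_choose_two {α : G} (hα : α ∈ commutator G) (β w : G) {N : ℕ}
    (hN : p ∣ N.choose 2) : pcomm (pcomm α β ^ N) w = pcomm (pcomm α β) w ^ N := by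
  obtain ⟨k, hk⟩ := hN
  rw [pcomm_pow_left_of_mem_commutator hM (pcomm_mem_commutator α β), hk, pow_mul,
    pcomm_pcomm_pcomm_self_pow_eq_one hM hα, one_pow, mul_one]

theorem exists_pcomm_pow_left_eq (x y : G) (k : ℕ) :
    ∃ w ∈ centralizer (zpowersSupCommutator x),
      pcomm (x ^ k) y = pcomm x y ^ k * pcomm (pcomm x y) x ^ k.choose 2 * w := by
  set v := pcomm x y
  set s := pcomm v x
  set m := pcomm s x
  set n := pcomm s v
  have hS := tripleCommCentral_zpowersSupCommutator hM x
  have hv := commutator_le_zpowersSupCommutator x (pcomm_mem_commutator x y)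
  have hx := mem_zpowersSupCommutator_self x
  have hs := commutator_le_zpowersSupCommutator x (pcomm_mem_commutator v x)
  have hm : m ∈ centralizer (zpowersSupCommutator x) := hS v hv x hx x hx
  have hn : n ∈ centralizer (zpowersSupCommutator x) := hS v hv x hx v hv
  induction k with
  | zero => exact ⟨1, one_mem _, by simp [pcomm_one_left]⟩
  | succ k ih =>
    obtain ⟨w, hw, hk⟩ := ih
    refine ⟨n ^ (k * k) * m ^ k.choose 2 * w,
      mul_mem (mul_mem (pow_mem hn _) (pow_mem hm _)) hw, ?_⟩
    have hmvs : Commute (m ^ k.choose 2) (v ^ k * s ^ k.choose 2) :=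
      (((commute_of_mem_centralizer hm hv).pow_right k).mul_right
        ((commute_of_mem_centralizer hm hs).pow_right _)).pow_left _
    have hns : Commute (n ^ (k * k)) (s ^ k.choose 2) :=
      (commute_of_mem_centralizer hn hs).pow_pow _ _
    rw [pow_succ', pcomm_mul_left, pcomm_pow_right_of_mem_commutator hM (pcomm_mem_commutator x y),
      hk, Nat.choose_succ_succ', Nat.choose_one_right, pow_add s]
    calc v * (s ^ k * m ^ k.choose 2) * (v ^ k * s ^ k.choose 2 * w)
        = v * s ^ k * (m ^ k.choose 2 * (v ^ k * s ^ k.choose 2)) * w := by group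
      _ = v * (s ^ k * v ^ k) * s ^ k.choose 2 * (m ^ k.choose 2 * w) := by
        rw [hmvs.eq]; group
      _ = v * (v ^ k * s ^ k * n ^ (k * k)) * s ^ k.choose 2 * (m ^ k.choose 2 * w) := by
        rw [pow_mul_pow_eq_mul_pcomm_pow (commute_of_mem_centralizer hn hs)
          (commute_of_mem_centralizer hn hv)]
      _ = v ^ (k + 1) * s ^ k * (n ^ (k * k) * s ^ k.choose 2) * (m ^ k.choose 2 * w) := by
        group
      _ = _ := by rw [hns.eq]; group

theorem exists_pcomm_pow_right_eq (x y : G) (k : ℕ) :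
    ∃ w ∈ centralizer (zpowersSupCommutator x),
      pcomm y (x ^ k) = pcomm y x ^ k * pcomm (pcomm y x) x ^ k.choose 2 * w := by
  set v := pcomm y x
  set s := pcomm v x
  set m := pcomm s x
  set n := pcomm s v
  have hS := tripleCommCentral_zpowersSupCommutator hM x
  have hv := commutator_le_zpowersSupCommutator x (pcomm_mem_commutator y x)
  have hx := mem_zpowersSupCommutator_self x
  have hs := commutator_le_zpowersSupCommutator x (pcomm_mem_commutator v x)
  have hm : m ∈ centralizer (zpowersSupCommutator x) := hS v hv x hx x hx
  have hn : n ∈ centralizer (zpowersSupCommutator x) := hS v hv x hx v hv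
  induction k with
  | zero => exact ⟨1, one_mem _, by simp [pcomm_one_right]⟩
  | succ k ih =>
    obtain ⟨w, hw, hk⟩ := ih
    refine ⟨n ^ k.choose 2 * w * m ^ k.choose 2,
      mul_mem (mul_mem (pow_mem hn _) hw) (pow_mem hm _), ?_⟩
    have hwvs : Commute w (v * s ^ k) :=
      (commute_of_mem_centralizer hw hv).mul_right ((commute_of_mem_centralizer hw hs).pow_right k)
    have hns : Commute (n ^ k.choose 2) (s ^ k) :=
      (commute_of_mem_centralizer hn hs).pow_pow _ _
    have hsv := pow_mul_pow_eq_mul_pcomm_pow (commute_of_mem_centralizer hn hs)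
      (commute_of_mem_centralizer hn hv) (k.choose 2) 1
    rw [pow_one, mul_one] at hsv
    rw [pow_succ', pcomm_mul_right, pcomm_pow_right_of_mem_commutator hM (pcomm_mem_commutator y x),
      hk, Nat.choose_succ_succ', Nat.choose_one_right, pow_add s]
    calc v ^ k * s ^ k.choose 2 * w * (v * (s ^ k * m ^ k.choose 2))
        = v ^ k * s ^ k.choose 2 * (w * (v * s ^ k)) * m ^ k.choose 2 := by group
      _ = v ^ k * (s ^ k.choose 2 * v) * s ^ k * (w * m ^ k.choose 2) := by
        rw [hwvs.eq]; group
      _ = v ^ k * (v * s ^ k.choose 2 * n ^ k.choose 2) * s ^ k * (w * m ^ k.choose 2) := by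
        rw [hsv]
      _ = v ^ (k + 1) * s ^ k.choose 2 * (n ^ k.choose 2 * s ^ k) * (w * m ^ k.choose 2) := by
        group
      _ = _ := by rw [hns.eq, (Commute.pow_pow_self s _ _).eq]; group

variable (hp : Odd p)
include hp

theorem pow_mem_centralizer_zpowersSupCommutator {g x : G} (hg : g ∈ commutator G)
    (hgc : g ∈ centralizer (commutator G)) (hgx : Commute g (x ^ p)) {N : ℕ} (hN : p ∣ N) :
    g ^ N ∈ centralizer (zpowersSupCommutator x) := by
  have h₁ : pcomm g (x ^ p) = 1 := hgx.pcomm_eq_one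
  have hD : pcomm (pcomm g x) x ^ p = 1 := by
    rw [pcomm_pcomm_pow_right_of_mem_commutator hM hg, h₁, pcomm_one_left]
  have he : pcomm g x ^ p = 1 := by
    obtain ⟨k, hk⟩ := hp.dvd_choose_two (dvd_refl p)
    rwa [pcomm_pow_right_of_mem_commutator hM hg, hk, pow_mul, hD, one_pow, mul_one] at h₁
  have hgpx : Commute (g ^ p) x := by
    rw [← pcomm_eq_one_iff, pcomm_pow_left_of_mem_commutator hM hg, he, one_mul,
      (commute_of_mem_centralizer hgc (pcomm_mem_commutator g x)).symm.pcomm_eq_one, one_pow]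
  obtain ⟨k, rfl⟩ := hN
  rw [pow_mul]
  exact pow_mem (mem_centralizer_zpowersSupCommutator hgpx (pow_mem hgc p)) k

theorem pcomm_pcomm_pow_mem_centralizer {u t a b c : G}
    (ha : a ∈ closure {u, t ^ p} ⊔ commutator G)
    (hb : b ∈ closure {u, t ^ p} ⊔ commutator G)
    (hc : c ∈ closure {u, t ^ p} ⊔ commutator G) {N : ℕ} (hN : p ∣ N) :
    pcomm (pcomm a b) c ^ N ∈ centralizer (zpowersSupCommutator t) :=
  have h := hM u t a ha b hb c hc
  pow_mem_centralizer_zpowersSupCommutator hM hp (pcomm_mem_commutator _ _)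
    (centralizer_closure_pair_sup_le u (t ^ p) h)
    (commute_of_mem_centralizer h (right_mem_closure_pair_sup u _ _)) hN

theorem pcomm_pow_mem_centralizer_of_pcomm_pow_mem {g z : G} (hg : g ∈ commutator G)
    {N : Subgroup G} [N.Normal] (h : pcomm g (z ^ p) ∈ centralizer N) :
    pcomm g z ^ p ∈ centralizer N := by
  obtain ⟨k, hk⟩ := hp.dvd_choose_two (dvd_refl p)
  have hD : pcomm (pcomm g z) z ^ p.choose 2 ∈ centralizer N := by
    rw [hk, pow_mul, pcomm_pcomm_pow_right_of_mem_commutator hM hg]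
    exact pow_mem (pcomm_mem_centralizer h z) k
  have := mul_mem h (inv_mem hD)
  rwa [pcomm_pow_right_of_mem_commutator hM hg, mul_inv_cancel_right] at this

-- `vᵖ [v, x]^(p choose 2) w` is the shape of `[xᵖ, y]` and `[y, xᵖ]` found above.
theorem pcomm_pcomm_collected_third_self {v x w : G} (hv : v ∈ commutator G)
    (hw : w ∈ centralizer (zpowersSupCommutator x)) (t : G) :
    pcomm (pcomm (v ^ p * pcomm v x ^ p.choose 2 * w) x) t = pcomm (pcomm v x) t ^ p := by
  set s := pcomm v x
  have hC : p ∣ p.choose 2 := hp.dvd_choose_two (dvd_refl p)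
  have hS := tripleCommCentral_zpowersSupCommutator hM x
  have hv' := commutator_le_zpowersSupCommutator x hv
  have hx := mem_zpowersSupCommutator_self x
  have hs := commutator_le_zpowersSupCommutator x (pcomm_mem_commutator v x)
  have hvM : v ∈ closure {x, t ^ p} ⊔ commutator G := mem_sup_right hv
  have hxM := left_mem_closure_pair_sup x (t ^ p) (commutator G)
  have hR : pcomm s v ^ p.choose 2 * pcomm s x ^ p.choose 2 ∈
      centralizer (zpowersSupCommutator t) :=
    mul_mem (pcomm_pcomm_pow_mem_centralizer hM hp hvM hxM hvM hC)
      (pcomm_pcomm_pow_mem_centralizer hM hp hvM hxM hxM hC)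
  have hUx : pcomm (v ^ p * s ^ p.choose 2 * w) x =
      s ^ p * (pcomm s v ^ p.choose 2 * pcomm s x ^ p.choose 2) := by
    rw [pcomm_mul_of_mem_centralizer_zpowersSupCommutator hw, pcomm_mul_left,
      pcomm_pow_left_of_mem_commutator hM hv, pcomm_pow_left_of_mem_commutator hM
        (pcomm_mem_commutator v x), (hS.commute hv' hx hx hs).pcomm_eq_one, one_pow, mul_one,
      ((Commute.pow_pow_self s _ _).mul_left
        ((hS.commute hv' hx hv' hs).pow_pow _ _)).pcomm_eq_one, mul_one, mul_assoc]
  rw [hUx, pcomm_mul_of_mem_centralizer_zpowersSupCommutator hR,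
    pcomm_pow_left_of_dvd_choose_two hM hv x t hC]

theorem exists_pcomm_collected_eq {v x w : G} (hv : v ∈ commutator G)
    (hw : w ∈ centralizer (zpowersSupCommutator x)) (z : G) :
    ∃ R ∈ centralizer (zpowersSupCommutator x),
      pcomm (v ^ p * pcomm v x ^ p.choose 2 * w) z = pcomm v z ^ p * R := by
  set s := pcomm v x
  set q := pcomm v z
  have hC : p ∣ p.choose 2 := hp.dvd_choose_two (dvd_refl p)
  have hs : s ∈ commutator G := pcomm_mem_commutator v x
  have hq : q ∈ commutator G := pcomm_mem_commutator v z
  have hvM : v ∈ closure {z, x ^ p} ⊔ commutator G := mem_sup_right hv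
  have hzM := left_mem_closure_pair_sup z (x ^ p) (commutator G)
  have hsM : s ∈ closure {z, x ^ p} ⊔ commutator G := mem_sup_right hs
  have hρ := pcomm_pcomm_pow_mem_centralizer hM hp hvM hzM hvM hC
  have hχ := pcomm_pcomm_pow_mem_centralizer hM hp hvM hzM hsM (dvd_mul_right p (p.choose 2))
  have hχ' : pcomm q s ∈ centralizer (commutator G) :=
    centralizer_closure_pair_sup_le z (x ^ p) (hM z x v hvM z hzM s hsM)
  have hρ' := centralizer_zpowersSupCommutator_le x hρ
  have hsz : pcomm s z ^ p.choose 2 ∈ centralizer (zpowersSupCommutator x) := by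
    obtain ⟨k, hk⟩ := hC
    rw [hk, pow_mul]
    refine pow_mem (pcomm_pow_mem_centralizer_of_pcomm_pow_mem hM hp hs ?_) k
    exact centralizer_le (zpowersSupCommutator_le_closure_pair_sup x (z ^ p))
      (hM x z v (mem_sup_right hv) x (left_mem_closure_pair_sup _ _ _) (z ^ p)
        (right_mem_closure_pair_sup _ _ _))
  have hqs : pcomm (q ^ p) s = pcomm q s ^ p := by
    rw [pcomm_pow_left_of_mem_commutator hM hq, (commute_of_mem_centralizer hχ' hq).pcomm_eq_one,
      one_pow, mul_one]
  have hqsC : pcomm (q ^ p * pcomm q v ^ p.choose 2) (s ^ p.choose 2) =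
      pcomm q s ^ (p * p.choose 2) := by
    rw [pcomm_mul_left_of_mem_centralizer hρ',
      (commute_of_mem_centralizer hρ' (pow_mem hs _)).pcomm_eq_one, mul_one,
      pcomm_pow_right_of_commute (hqs ▸ (commute_of_mem_centralizer hχ' hs).pow_left p), hqs,
      pow_mul]
  refine ⟨pcomm q v ^ p.choose 2 * pcomm q s ^ (p * p.choose 2) * pcomm s z ^ p.choose 2 *
    pcomm w z, mul_mem (mul_mem (mul_mem hρ hχ) hsz) (pcomm_mem_centralizer hw z), ?_⟩
  rw [pcomm_mul_left_of_mem_centralizer (centralizer_zpowersSupCommutator_le x hw),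
    pcomm_mul_left, pcomm_pow_left_of_mem_commutator hM hv, hqsC,
    pcomm_pow_left_of_dvd_choose_two hM hv x z (hp.dvd_choose_two hC)]
  simp only [q, s, mul_assoc]

theorem pcomm_pcomm_collected_fourth_self {v x w : G} (hv : v ∈ commutator G)
    (hw : w ∈ centralizer (zpowersSupCommutator x)) (z : G) :
    pcomm (pcomm (v ^ p * pcomm v x ^ p.choose 2 * w) z) x = pcomm (pcomm v z) x ^ p := by
  obtain ⟨R, hR, hUz⟩ := exists_pcomm_collected_eq hM hp hv hw z
  rw [hUz, pcomm_mul_of_mem_centralizer_zpowersSupCommutator hR,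
    pcomm_pow_left_of_dvd_choose_two hM hv z x (hp.dvd_choose_two (dvd_refl p))]

end

end

theorem comm_pth_power_expansion_special_general
    (p : ℕ) (hp : p.Prime) (hp3 : 3 ≤ p) {G : Type*} [Group G] [Finite G]
    (hG : IsPGroup p G)
    (hclass : (⊤ : Subgroup G).lowerCentralSeries 3 ≠ ⊥)
    (hproper : ∀ H : Subgroup G, H ≠ ⊤ → (⊤ : Subgroup H).lowerCentralSeries 3 = ⊥)
    (x y z t : G) (hzt : z = x ∨ t = x) :
    lcomm (x ^ p) y [z, t] = (lcomm x y [z, t]) ^ p ∧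
    lcomm y (x ^ p) [z, t] = (lcomm y x [z, t]) ^ p := by
  have : Fact p.Prime := ⟨hp⟩
  have hG' : commutator G ≠ ⊥ := by
    intro h
    apply hclass
    rw [eq_bot_iff, ← h, ← top_lowerCentralSeries_one]
    exact Subgroup.lowerCentralSeries_antitone ⊤ (by norm_num)
  have hM (a b : G) : TripleCommCentral (closure {a, b ^ p} ⊔ commutator G) :=
    tripleCommCentral_of_lowerCentralSeries_eq_bot
      (hproper _ (closure_pow_sup_commutator_ne_top hG hG' a b))
  have hodd : Odd p := hp.odd_of_ne_two (by omega)
  have hv := pcomm_mem_commutator x y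
  have hv' := pcomm_mem_commutator y x
  obtain ⟨w₁, hw₁, h₁⟩ := exists_pcomm_pow_left_eq hM x y p
  obtain ⟨w₂, hw₂, h₂⟩ := exists_pcomm_pow_right_eq hM x y p
  simp only [lcomm, List.foldl, h₁, h₂]
  rcases hzt with rfl | rfl
  · exact ⟨pcomm_pcomm_collected_third_self hM hodd hv hw₁ t,
      pcomm_pcomm_collected_third_self hM hodd hv' hw₂ t⟩
  · exact ⟨pcomm_pcomm_collected_fourth_self hM hodd hv hw₁ z,
      pcomm_pcomm_collected_fourth_self hM hodd hv' hw₂ z⟩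

/-- Let `p ≥ 3` be a prime and let `G` be a finite `p`-group generated by two elements, of
nilpotency class greater than `3` and in which every proper subgroup has nilpotency class
at most `3`.  Then for all `x, y, z, t ∈ G` with `z = x` or `t = x`:
`[x^p, y, z, t] = [x,y,z,t]^p` and `[y, x^p, z, t] = [y,x,z,t]^p`. -/
theorem comm_pth_power_expansion_special
    (p : ℕ) (hp : p.Prime) (hp3 : 3 ≤ p) {G : Type*} [Group G] [Finite G]
    (hG : IsPGroup p G)
    (hgen : ∃ a b : G, Subgroup.closure {a, b} = ⊤)
    (hclass : (⊤ : Subgroup G).lowerCentralSeries 3 ≠ ⊥)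
    (hproper : ∀ H : Subgroup G, H ≠ ⊤ → (⊤ : Subgroup H).lowerCentralSeries 3 = ⊥)
    (x y z t : G) (hzt : z = x ∨ t = x) :
    lcomm (x ^ p) y [z, t] = (lcomm x y [z, t]) ^ p ∧
    lcomm y (x ^ p) [z, t] = (lcomm y x [z, t]) ^ p :=
  comm_pth_power_expansion_special_general p hp hp3 hG hclass hproper x y z t hzt
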